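/- arXiv:2112.12436 — 4 statements merged into one kernel-verified Lean document; each statement's English description precedes it below -/
import Mathlib

section
/- Let n ≥ 2 be an integer and let q₁, q₂ be nonzero complex numbers with q₁ + (−1)ⁿq₂ ≠ 0. Then the quotient ring R = ℂ[h₁,h₂]/( (∑_{k=0}^{n} h₁ᵏ(−h₂)^{n−k}) − q₁ − (−1)ⁿq₂ , h₁^{n+1} − q₁(h₁+h₂) ) is a finite-dimensional ℂ-vector space and is reduced; equivalently, R is a semisimple ring, i.e. isomorphic to a finite product of copies of ℂ. -/
/-!
Solving the second relation for `h₂` gives `h₂ = h₁ⁿ⁺¹/q₁ - h₁ = -h₁ w` with `w = 1 - h₁ⁿ/q₁`,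
so the ring is `ℂ[h₁]` modulo the first relation with `h₂` eliminated. Since `1 - w = h₁ⁿ/q₁`,
the geometric sum `∑ h₁ᵏ (h₁ w)ⁿ⁻ᵏ = h₁ⁿ (1 - wⁿ⁺¹)/(1 - w)` turns that relation into
`-g` with `g = q₁ wⁿ⁺¹ + (-1)ⁿ q₂`. Now `g' = -n(n+1) h₁ⁿ⁻¹ wⁿ`, and `g` is coprime to `h₁`
(as `g(0) = q₁ + (-1)ⁿ q₂ ≠ 0`) and to `w` (as `g ≡ (-1)ⁿ q₂ mod w`), so `g` is separable and
the Chinese remainder theorem splits `ℂ[h₁]/(g)` into one copy of `ℂ` per root of `g`.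
-/

open MvPolynomial
open scoped Polynomial

/-- The small quantum cohomology ring of `Fl(1,n;n+1)` with quantum parameters
specialized to `q₁, q₂`: the quotient of `ℂ[h₁,h₂]` by the two relations. -/
noncomputable def qhFlIdeal (n : ℕ) (q₁ q₂ : ℂ) : Ideal (MvPolynomial (Fin 2) ℂ) :=
  Ideal.span
    { (∑ k ∈ Finset.range (n + 1), (X 0 : MvPolynomial (Fin 2) ℂ) ^ k * (-X 1) ^ (n - k))
        - C q₁ - C ((-1 : ℂ) ^ n * q₂),
      (X 0 : MvPolynomial (Fin 2) ℂ) ^ (n + 1) - C q₁ * (X 0 + X 1) }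

theorem map_mul_map_inv_eq_one {K A F : Type*} [DivisionRing K] [Semiring A] [FunLike F K A]
    [RingHomClass F K A] (f : F) {q : K} (hq : q ≠ 0) : f q * f q⁻¹ = 1 := by
  rw [← map_mul, mul_inv_cancel₀ hq, map_one]

theorem isCoprime_of_isUnit_right {R : Type*} [CommSemiring R] {x u : R} (hu : IsUnit u) :
    IsCoprime x u := by
  simpa using (isCoprime_mul_unit_left_right hu x 1).mpr isCoprime_one_right

namespace Polynomial

section SplitSeparable

variable {K : Type*} [Field K] [DecidableEq K] {g : K[X]}

theorem span_singleton_eq_iInf_span_X_sub_C (hsplit : g.Splits) (hsep : g.Separable) :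
    Ideal.span {g} = ⨅ a : g.roots.toFinset, Ideal.span {X - C (a : K)} := by
  rw [Ideal.iInf_span_singleton fun _ _ hab => pairwise_coprime_X_sub_C Subtype.val_injective hab,
    Finset.prod_coe_sort g.roots.toFinset (fun a => X - C a),
    Ideal.span_singleton_eq_span_singleton, Finset.prod_eq_multiset_prod,
    Multiset.toFinset_val, (nodup_roots hsep).dedup]
  conv_lhs => rw [hsplit.eq_prod_roots]
  exact associated_unit_mul_left _ _
    (isUnit_C.mpr (leadingCoeff_ne_zero.mpr hsep.ne_zero).isUnit)

noncomputable def quotientSpanAlgEquivPiRoots (hsplit : g.Splits) (hsep : g.Separable) :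
    (K[X] ⧸ Ideal.span {g}) ≃ₐ[K] (g.roots.toFinset → K) :=
  ((Ideal.quotientEquivAlgOfEq K (span_singleton_eq_iInf_span_X_sub_C hsplit hsep)).trans
    (AlgEquiv.ofRingEquiv (f := Ideal.quotientInfRingEquivPiQuotient _ fun _ _ hab =>
      (Ideal.isCoprime_span_singleton_iff _ _).mpr
        (pairwise_coprime_X_sub_C Subtype.val_injective hab)) fun _ => rfl)).trans
    (AlgEquiv.piCongrRight fun a => quotientSpanXSubCAlgEquiv (a : K))

end SplitSeparable

section QhFl

variable {K : Type*} [Field K] (n : ℕ) {q₁ : K} (q₂ : K)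

/-- The class `h₂` as a polynomial in `h₁`, solved from the second relation. -/
noncomputable def qhFlH₂ (n : ℕ) (q₁ : K) : K[X] := C q₁⁻¹ * X ^ (n + 1) - X

noncomputable def qhFlW (n : ℕ) (q₁ : K) : K[X] := 1 - C q₁⁻¹ * X ^ n

noncomputable def qhFlPoly (n : ℕ) (q₁ q₂ : K) : K[X] :=
  C q₁ * qhFlW n q₁ ^ (n + 1) + C ((-1) ^ n * q₂)

theorem neg_qhFlH₂ : -qhFlH₂ n q₁ = X * qhFlW n q₁ := by
  simp only [qhFlH₂, qhFlW]
  ring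

theorem sum_X_pow_mul_X_mul_qhFlW_pow (hq₁ : q₁ ≠ 0) :
    ∑ k ∈ Finset.range (n + 1), X ^ k * (X * qhFlW n q₁) ^ (n - k) =
      C q₁ * (1 - qhFlW n q₁ ^ (n + 1)) := by
  have hdiff : X - X * qhFlW n q₁ = C q₁⁻¹ * X ^ (n + 1) := by
    simp only [qhFlW]
    ring
  refine mul_right_cancel₀ (b := X - X * qhFlW n q₁) ?_ ?_
  · rw [hdiff]
    exact mul_ne_zero (C_ne_zero.mpr (inv_ne_zero hq₁)) (pow_ne_zero _ X_ne_zero)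
  · have hgeom := geom_sum₂_mul (X : K[X]) (X * qhFlW n q₁) (n + 1)
    simp only [Nat.add_sub_cancel] at hgeom
    rw [hgeom, mul_pow, hdiff]
    linear_combination (-(X ^ (n + 1) * (1 - qhFlW n q₁ ^ (n + 1)))) *
      map_mul_map_inv_eq_one C hq₁

theorem eval_zero_qhFlPoly (hn : n ≠ 0) : (qhFlPoly n q₁ q₂).eval 0 = q₁ + (-1) ^ n * q₂ := by
  simp [qhFlPoly, qhFlW, zero_pow hn]

theorem derivative_qhFlPoly (hq₁ : q₁ ≠ 0) :
    derivative (qhFlPoly n q₁ q₂) =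
      C (-((n + 1) * n : K)) * (X ^ (n - 1) * qhFlW n q₁ ^ n) := by
  simp only [qhFlPoly, qhFlW, derivative_add, derivative_C, add_zero, derivative_C_mul,
    derivative_pow, derivative_sub, derivative_one, derivative_X, mul_one, zero_sub,
    Nat.add_sub_cancel]
  simp only [map_neg, map_mul, map_add, map_one, map_natCast, Nat.cast_add, Nat.cast_one]
  linear_combination (-(((n : K[X]) + 1) * n * (1 - C q₁⁻¹ * X ^ n) ^ n * X ^ (n - 1))) *
    map_mul_map_inv_eq_one C hq₁

theorem separable_qhFlPoly [CharZero K] (hn : n ≠ 0) (hq₁ : q₁ ≠ 0) (hq₂ : q₂ ≠ 0)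
    (hq : q₁ + (-1) ^ n * q₂ ≠ 0) : (qhFlPoly n q₁ q₂).Separable := by
  have hX : IsCoprime (qhFlPoly n q₁ q₂) X := by
    refine (irreducible_X.coprime_iff_not_dvd.mpr ?_).symm
    rwa [X_dvd_iff, coeff_zero_eq_eval_zero, eval_zero_qhFlPoly n q₂ hn]
  have hW : IsCoprime (qhFlPoly n q₁ q₂) (qhFlW n q₁) := by
    have hmod : qhFlPoly n q₁ q₂ =
        C ((-1) ^ n * q₂) + qhFlW n q₁ * (C q₁ * qhFlW n q₁ ^ n) := by
      rw [qhFlPoly]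
      ring
    rw [hmod]
    exact (isCoprime_of_isUnit_right (isUnit_C.mpr (by simp [hq₂]))).symm.add_mul_left_left _
  have hconst : IsCoprime (qhFlPoly n q₁ q₂) (C (-((n + 1) * n : K))) :=
    isCoprime_of_isUnit_right (isUnit_C.mpr (by simp [hn, Nat.cast_add_one_ne_zero]))
  rw [separable_def, derivative_qhFlPoly n q₂ hq₁]
  exact hconst.mul_right (hX.pow_right.mul_right hW.pow_right)

end QhFl

end Polynomial

section GraphQuotient

variable {R : Type*} [CommRing R] (p : MvPolynomial (Fin 2) R) (f : R[X])

theorem aeval_X_comp_aeval_graph_eq_mkₐ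
    {I : Ideal (MvPolynomial (Fin 2) R)} (hI : X 1 - Polynomial.aeval (X 0) f ∈ I) :
    (Polynomial.aeval (Ideal.Quotient.mk I (X 0))).comp (aeval ![Polynomial.X, f]) =
      Ideal.Quotient.mkₐ R I := by
  refine MvPolynomial.algHom_ext fun i => ?_
  fin_cases i
  · simp
  · simp only [AlgHom.comp_apply, aeval_X, Fin.mk_one, Matrix.cons_val_one,
      Matrix.cons_val_fin_one, Ideal.Quotient.mkₐ_eq_mk]
    rw [← Ideal.Quotient.mkₐ_eq_mk R, Polynomial.aeval_algHom_apply, Ideal.Quotient.mkₐ_eq_mk,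
      Ideal.Quotient.mk_eq_mk_iff_sub_mem, ← neg_sub]
    exact I.neg_mem hI

noncomputable def quotientSpanGraphAlgEquiv :
    (MvPolynomial (Fin 2) R ⧸ Ideal.span {p, X 1 - Polynomial.aeval (X 0) f}) ≃ₐ[R]
      R[X] ⧸ Ideal.span {aeval ![Polynomial.X, f] p} :=
  let I := Ideal.span {p, X 1 - Polynomial.aeval (X 0) f}
  let J := Ideal.span {aeval ![Polynomial.X, f] p}
  have hsection := aeval_X_comp_aeval_graph_eq_mkₐ f (I := I) (Ideal.subset_span (by simp))
  have hI : I ≤ RingHom.ker ((Ideal.Quotient.mkₐ R J).comp (aeval ![Polynomial.X, f])) := by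
    refine Ideal.span_le.mpr (Set.insert_subset_iff.mpr ⟨?_, Set.singleton_subset_iff.mpr ?_⟩)
    · exact Ideal.Quotient.eq_zero_iff_mem.mpr (Ideal.subset_span rfl)
    · simp [RingHom.mem_ker, ← Polynomial.aeval_algHom_apply]
  have hJ : J ≤ RingHom.ker (Polynomial.aeval (Ideal.Quotient.mk I (X 0))) := by
    rw [Ideal.span_le, Set.singleton_subset_iff, SetLike.mem_coe, RingHom.mem_ker,
      ← AlgHom.comp_apply, hsection, Ideal.Quotient.mkₐ_eq_mk, Ideal.Quotient.eq_zero_iff_mem]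
    exact Ideal.subset_span (by simp)
  AlgEquiv.ofAlgHom
    (Ideal.Quotient.liftₐ I _ fun _ ha => RingHom.mem_ker.mp (hI ha))
    (Ideal.Quotient.liftₐ J _ fun _ hb => RingHom.mem_ker.mp (hJ hb))
    (Ideal.Quotient.algHom_ext R (Polynomial.algHom_ext (by
      rw [AlgHom.comp_assoc, Ideal.Quotient.liftₐ_comp, AlgHom.comp_apply, Polynomial.aeval_X,
        ← Ideal.Quotient.mkₐ_eq_mk R, ← AlgHom.comp_apply, Ideal.Quotient.liftₐ_comp]
      simp [J])))
    (Ideal.Quotient.algHom_ext R (by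
      rw [AlgHom.comp_assoc, Ideal.Quotient.liftₐ_comp, ← AlgHom.comp_assoc,
        Ideal.Quotient.liftₐ_comp, hsection, AlgHom.id_comp]))

end GraphQuotient

noncomputable def qhFlFirstRelation {K : Type*} [Field K] (n : ℕ) (q₁ q₂ : K) :
    MvPolynomial (Fin 2) K :=
  (∑ k ∈ Finset.range (n + 1), (X 0 : MvPolynomial (Fin 2) K) ^ k * (-X 1) ^ (n - k))
    - C q₁ - C ((-1 : K) ^ n * q₂)

theorem aeval_qhFlFirstRelation {K : Type*} [Field K] (n : ℕ) {q₁ : K} (q₂ : K)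
    (hq₁ : q₁ ≠ 0) :
    aeval ![Polynomial.X, Polynomial.qhFlH₂ n q₁] (qhFlFirstRelation n q₁ q₂) =
      -Polynomial.qhFlPoly n q₁ q₂ := by
  simp only [qhFlFirstRelation, map_sub, map_sum, map_mul, map_pow, map_neg, aeval_X, aeval_C,
    Matrix.cons_val_zero, Matrix.cons_val_one, Polynomial.algebraMap_eq,
    Polynomial.neg_qhFlH₂, Polynomial.sum_X_pow_mul_X_mul_qhFlW_pow n hq₁, Polynomial.qhFlPoly]
  ring

theorem qhFlIdeal_eq_span_graph (n : ℕ) {q₁ : ℂ} (q₂ : ℂ) (hq₁ : q₁ ≠ 0) :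
    qhFlIdeal n q₁ q₂ = Ideal.span {qhFlFirstRelation n q₁ q₂,
      X 1 - Polynomial.aeval (X 0) (Polynomial.qhFlH₂ n q₁)} := by
  have hrel : (X 0 : MvPolynomial (Fin 2) ℂ) ^ (n + 1) - C q₁ * (X 0 + X 1) =
      -C q₁ * (X 1 - Polynomial.aeval (X 0) (Polynomial.qhFlH₂ n q₁)) := by
    simp only [Polynomial.qhFlH₂, map_sub, map_mul, map_pow, Polynomial.aeval_X,
      Polynomial.aeval_C, MvPolynomial.algebraMap_eq]
    linear_combination -(X 0 : MvPolynomial (Fin 2) ℂ) ^ (n + 1) * map_mul_map_inv_eq_one C hq₁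
  rw [qhFlIdeal, ← qhFlFirstRelation, hrel, Ideal.span_insert, Ideal.span_insert,
    Ideal.span_singleton_mul_left_unit (hq₁.isUnit.map C).neg]

noncomputable def qhFlAlgEquiv (n : ℕ) {q₁ : ℂ} (q₂ : ℂ) (hq₁ : q₁ ≠ 0) :
    (MvPolynomial (Fin 2) ℂ ⧸ qhFlIdeal n q₁ q₂) ≃ₐ[ℂ]
      ℂ[X] ⧸ Ideal.span {Polynomial.qhFlPoly n q₁ q₂} :=
  (Ideal.quotientEquivAlgOfEq ℂ (qhFlIdeal_eq_span_graph n q₂ hq₁)).trans <|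
    (quotientSpanGraphAlgEquiv _ _).trans <| Ideal.quotientEquivAlgOfEq ℂ <| by
      rw [aeval_qhFlFirstRelation n q₂ hq₁, Ideal.span_singleton_neg]

theorem stmt_0 (n : ℕ) (hn : 2 ≤ n) (q₁ q₂ : ℂ) (hq₁ : q₁ ≠ 0) (hq₂ : q₂ ≠ 0)
    (hq : q₁ + (-1 : ℂ) ^ n * q₂ ≠ 0) :
    FiniteDimensional ℂ (MvPolynomial (Fin 2) ℂ ⧸ qhFlIdeal n q₁ q₂) ∧
    IsReduced (MvPolynomial (Fin 2) ℂ ⧸ qhFlIdeal n q₁ q₂) ∧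
    ∃ m : ℕ, Nonempty ((MvPolynomial (Fin 2) ℂ ⧸ qhFlIdeal n q₁ q₂) ≃ₐ[ℂ] (Fin m → ℂ)) := by
  have hsep := Polynomial.separable_qhFlPoly n q₂ (by omega) hq₁ hq₂ hq
  let e := (qhFlAlgEquiv n q₂ hq₁).trans <|
    (Polynomial.quotientSpanAlgEquivPiRoots (IsAlgClosed.splits _) hsep).trans <|
      AlgEquiv.piCongrLeft' ℂ (fun _ => ℂ) (Fintype.equivFin _)
  exact ⟨e.symm.toLinearEquiv.finiteDimensional, isReduced_of_injective e.toRingHom e.injective,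
    _, ⟨e⟩⟩
end

section
/- Let n ≥ 2 be an integer and let q₁, q₂ be nonzero complex numbers with q₁ + (−1)ⁿq₂ = 0. Then the quotient ring R = ℂ[h₁,h₂]/( (∑_{k=0}^{n} h₁ᵏ(−h₂)^{n−k}) − q₁ − (−1)ⁿq₂ , h₁^{n+1} − q₁(h₁+h₂) ) has exactly one maximal ideal 𝔪 for which the localization R_𝔪 is not a field, and for this 𝔪 the localization R_𝔪 is isomorphic as a ℂ-algebra to ℂ[ε]/(εⁿ). -/
open MvPolynomial

/-!
Eliminating `h₂ = h₁ⁿ⁺¹/q₁ - h₁` by the second relation, and using `q₁ + (-1)ⁿq₂ = 0` to drop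
the constant of the first, the ring becomes `ℂ[x]/(f)` with `f = xⁿ · ∑_{j ≤ n} wʲ`,
`w = 1 - xⁿ/q₁`. Its maximal ideals are the roots `a` of `f`, with local ring
`ℂ[x]/((x - a)^m)`, `m` the multiplicity of `a`. The cofactor is `n + 1` at `0`, so `0` has
multiplicity `n`; all other roots are simple, because `(w - 1) · ∑ wʲ = wⁿ⁺¹ - 1` and neither
`w` nor `w'` vanishes at them.
-/

open scoped Polynomial

namespace Polynomial

variable {K : Type*} [Field K]

noncomputable def rootIdeal (f : K[X]) (a : K) : Ideal (K[X] ⧸ Ideal.span {f}) :=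
  (Ideal.span {X - C a}).map (Ideal.Quotient.mk _)

variable {f : K[X]} {a : K}

lemma comap_rootIdeal (ha : f.IsRoot a) :
    (rootIdeal f a).comap (Ideal.Quotient.mk _) = Ideal.span {X - C a} := by
  rw [rootIdeal, Ideal.comap_map_of_surjective' _ Ideal.Quotient.mk_surjective, Ideal.mk_ker,
    sup_eq_left, Ideal.span_singleton_le_span_singleton]
  exact dvd_iff_isRoot.mpr ha

lemma mk_mem_rootIdeal_iff (ha : f.IsRoot a) {t : K[X]} :
    Ideal.Quotient.mk _ t ∈ rootIdeal f a ↔ t.IsRoot a := by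
  rw [← Ideal.mem_comap, comap_rootIdeal ha, Ideal.mem_span_singleton, dvd_iff_isRoot]

lemma isMaximal_rootIdeal (ha : f.IsRoot a) : (rootIdeal f a).IsMaximal :=
  have := PrincipalIdealRing.isMaximal_of_irreducible (irreducible_X_sub_C a)
  Ideal.IsMaximal.map_of_surjective_of_ker_le Ideal.Quotient.mk_surjective <| by
    rw [Ideal.mk_ker, Ideal.span_singleton_le_span_singleton]
    exact dvd_iff_isRoot.mpr ha

lemma eq_of_rootIdeal_eq {b : K} (hb : f.IsRoot b) (h : rootIdeal f a = rootIdeal f b) :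
    a = b := by
  have : Ideal.Quotient.mk _ (X - C a) ∈ rootIdeal f b :=
    h ▸ Ideal.mem_map_of_mem _ (Ideal.mem_span_singleton_self _)
  exact root_X_sub_C.mp ((mk_mem_rootIdeal_iff hb).mp this)

lemma isUnit_mk_of_not_isRoot (m : ℕ) {t : K[X]} (ht : ¬ t.IsRoot a) :
    IsUnit (Ideal.Quotient.mk (Ideal.span {(X - C a) ^ m}) t) := by
  have hnil : IsNilpotent (Ideal.Quotient.mk (Ideal.span {(X - C a) ^ m}) (t - C (t.eval a))) :=
    ⟨m, by
      rw [← map_pow, Ideal.Quotient.eq_zero_iff_mem, Ideal.mem_span_singleton]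
      exact pow_dvd_pow_of_dvd X_sub_C_dvd_sub_C_eval m⟩
  have hunit : IsUnit (Ideal.Quotient.mk (Ideal.span {(X - C a) ^ m}) (C (t.eval a))) :=
    (isUnit_C.mpr (Ne.isUnit ht)).map _
  simpa using hnil.isUnit_add_left_of_commute hunit (Commute.all _ _)

theorem exists_eq_rootIdeal [IsAlgClosed K] (N : Ideal (K[X] ⧸ Ideal.span {f})) [N.IsMaximal] :
    ∃ a, f.IsRoot a ∧ N = rootIdeal f a := by
  have hN := Ideal.comap_isMaximal_of_surjective _ Ideal.Quotient.mk_surjective (K := N)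
  obtain ⟨p, hp⟩ := (IsPrincipalIdealRing.principal (N.comap (Ideal.Quotient.mk _)))
  rw [Ideal.submodule_span_eq] at hp
  have hdeg : p.degree ≠ 0 := fun h ↦ hN.ne_top <| by
    rw [hp, Ideal.span_singleton_eq_top, isUnit_iff_degree_eq_zero]; exact h
  obtain ⟨a, hpa⟩ := IsAlgClosed.exists_root p hdeg
  have hcomap : N.comap (Ideal.Quotient.mk _) = Ideal.span {X - C a} :=
    hN.eq_of_le (Ideal.span_singleton_ne_top (not_isUnit_X_sub_C a)) <| by
      rw [hp, Ideal.span_singleton_le_span_singleton]; exact dvd_iff_isRoot.mpr hpa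
  have hfN : f ∈ N.comap (Ideal.Quotient.mk _) := by
    rw [Ideal.mem_comap, Ideal.Quotient.eq_zero_iff_mem.mpr (Ideal.mem_span_singleton_self f)]
    exact N.zero_mem
  refine ⟨a, ?_, ?_⟩
  · rw [hcomap, Ideal.mem_span_singleton] at hfN; exact dvd_iff_isRoot.mp hfN
  · rw [rootIdeal, ← hcomap, Ideal.map_comap_of_surjective _ Ideal.Quotient.mk_surjective]

theorem isField_quotient_span_X_sub_C_pow_iff (m : ℕ) :
    IsField (K[X] ⧸ Ideal.span {(X - C a) ^ m}) ↔ m = 1 := by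
  rw [← Ideal.Quotient.maximal_ideal_iff_isField_quotient,
    ← Ideal.irreducible_iff_isMaximal_span_singleton (pow_ne_zero _ (X_sub_C_ne_zero a))]
  exact ⟨fun h ↦ by_contra fun hm ↦ not_irreducible_pow hm h,
    fun h ↦ h ▸ by simpa using irreducible_X_sub_C a⟩

theorem not_isField_quotient_span_X_pow {n : ℕ} (hn : n ≠ 1) :
    ¬ IsField (K[X] ⧸ Ideal.span {(X : K[X]) ^ n}) := by
  have := isField_quotient_span_X_sub_C_pow_iff (a := (0 : K)) n
  rw [C_0, sub_zero] at this
  exact mt this.mp hn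

theorem nonempty_localization_rootIdeal_algEquiv (hf : f ≠ 0) (ha : f.IsRoot a) :
    haveI := (isMaximal_rootIdeal ha).isPrime
    Nonempty (Localization.AtPrime (rootIdeal f a) ≃ₐ[K]
      K[X] ⧸ Ideal.span {(X - C a) ^ rootMultiplicity a f}) := by
  have := (isMaximal_rootIdeal ha).isPrime
  set m := rootMultiplicity a f
  obtain ⟨Q, hfQ, hQ⟩ := exists_eq_pow_rootMultiplicity_mul_and_not_dvd f hf a
  replace hQ : ¬ Q.IsRoot a := mt dvd_iff_isRoot.mpr hQ
  set A := K[X] ⧸ Ideal.span {f}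
  set B := K[X] ⧸ Ideal.span {(X - C a) ^ m}
  have hle : Ideal.span {f} ≤ Ideal.span {(X - C a) ^ m} := by
    rw [Ideal.span_singleton_le_span_singleton, hfQ]; exact dvd_mul_right _ _
  let : Algebra A B := (Ideal.Quotient.factorₐ K hle).toAlgebra
  have : IsScalarTower K A B :=
    IsScalarTower.of_algebraMap_eq' (Ideal.Quotient.factorₐ K hle).comp_algebraMap.symm
  -- Classes with `t(a) ≠ 0` are units in `B`, and the kernel of `A → B` is killed by the
  -- cofactor `Q ∉ rootIdeal f a`.
  have : IsLocalization.AtPrime B (rootIdeal f a) := by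
    refine ⟨?_, fun z ↦ ?_, fun {x y} hxy ↦ ?_⟩
    · rintro ⟨y, hy⟩
      obtain ⟨t, rfl⟩ := Ideal.Quotient.mk_surjective y
      exact isUnit_mk_of_not_isRoot m (mt (mk_mem_rootIdeal_iff ha).mpr hy)
    · obtain ⟨t, rfl⟩ := Ideal.Quotient.mk_surjective z
      exact ⟨⟨Ideal.Quotient.mk _ t, 1⟩, by rw [Submonoid.coe_one, map_one, mul_one]; rfl⟩
    · obtain ⟨u, rfl⟩ := Ideal.Quotient.mk_surjective x
      obtain ⟨v, rfl⟩ := Ideal.Quotient.mk_surjective y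
      obtain ⟨s, hs⟩ := Ideal.mem_span_singleton.mp (Ideal.Quotient.eq.mp hxy)
      refine ⟨⟨Ideal.Quotient.mk _ Q, mt (mk_mem_rootIdeal_iff ha).mp hQ⟩, ?_⟩
      rw [← map_mul, ← map_mul, Ideal.Quotient.eq, ← mul_sub, hs, hfQ]
      exact Ideal.mem_span_singleton.mpr ⟨s, by ring⟩
  exact ⟨(IsLocalization.algEquiv (rootIdeal f a).primeCompl _ B).restrictScalars K⟩

theorem exists_eq_comap_rootIdeal [IsAlgClosed K] {R : Type*} [CommRing R] [Algebra K R]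
    (hf : f ≠ 0) (e : R ≃ₐ[K] K[X] ⧸ Ideal.span {f}) (𝔪 : Ideal R) [𝔪.IsMaximal] :
    ∃ a, f.IsRoot a ∧ 𝔪 = (rootIdeal f a).comap e ∧
      Nonempty (Localization.AtPrime 𝔪 ≃ₐ[K]
        K[X] ⧸ Ideal.span {(X - C a) ^ rootMultiplicity a f}) := by
  have : (𝔪.comap e.symm).IsMaximal := Ideal.comap_isMaximal_of_equiv e.symm
  obtain ⟨a, ha, hN⟩ := exists_eq_rootIdeal (𝔪.comap e.symm)
  have h𝔪 : 𝔪 = (rootIdeal f a).comap e := by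
    rw [← hN]; ext; simp
  have := (isMaximal_rootIdeal ha).isPrime
  obtain ⟨φ⟩ := nonempty_localization_rootIdeal_algEquiv hf ha
  refine ⟨a, ha, h𝔪, ?_⟩
  subst h𝔪
  exact ⟨(IsLocalization.algEquivOfAlgEquiv (M := ((rootIdeal f a).comap e).primeCompl) _ _ e
    (e.toRingEquiv.map_primeCompl_comap_eq _)).trans φ⟩

end Polynomial

namespace MvPolynomial

variable {R : Type*} [CommRing R] (P : MvPolynomial (Fin 2) R) (φ : Polynomial R)

local notation "I" => Ideal.span {P, X 1 - Polynomial.aeval (X 0) φ}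
local notation "J" => Ideal.span {aeval ![Polynomial.X, φ] P}

lemma aeval_mk_comp_aeval :
    (Polynomial.aeval (Ideal.Quotient.mk I (X 0))).comp (aeval ![Polynomial.X, φ]) =
      Ideal.Quotient.mkₐ R I := by
  refine MvPolynomial.algHom_ext (Fin.forall_fin_two.mpr ⟨by simp, ?_⟩)
  simp only [AlgHom.comp_apply, aeval_X, Matrix.cons_val_one, Matrix.cons_val_zero,
    Ideal.Quotient.mkₐ_eq_mk]
  rw [← Ideal.Quotient.mkₐ_eq_mk R, Polynomial.aeval_algHom_apply, Ideal.Quotient.mkₐ_eq_mk]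
  exact ((Ideal.Quotient.mk_eq_mk_iff_sub_mem _ _).mpr (Ideal.subset_span (by simp))).symm

lemma span_le_ker_mkₐ_comp_aeval :
    I ≤ RingHom.ker ((Ideal.Quotient.mkₐ R J).comp (aeval ![Polynomial.X, φ])) := by
  refine Ideal.span_le.mpr (Set.insert_subset_iff.mpr ⟨?_, Set.singleton_subset_iff.mpr ?_⟩)
  · exact Ideal.Quotient.eq_zero_iff_mem.mpr (Ideal.mem_span_singleton_self _)
  · show Ideal.Quotient.mkₐ R J (aeval ![Polynomial.X, φ] (X 1 - Polynomial.aeval (X 0) φ)) = 0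
    rw [map_sub, aeval_X, ← Polynomial.aeval_algHom_apply, aeval_X]
    simp

noncomputable def quotientSpanSubstEquiv :
    (MvPolynomial (Fin 2) R ⧸ I) ≃ₐ[R] Polynomial R ⧸ J :=
  AlgEquiv.ofAlgHom
    (Ideal.Quotient.liftₐ _ ((Ideal.Quotient.mkₐ R _).comp (aeval ![Polynomial.X, φ]))
      fun _ ha ↦ RingHom.mem_ker.mp (span_le_ker_mkₐ_comp_aeval P φ ha))
    (Ideal.Quotient.liftₐ _ (Polynomial.aeval (Ideal.Quotient.mk _ (X 0))) fun a ha ↦ by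
      obtain ⟨c, rfl⟩ := Ideal.mem_span_singleton'.mp ha
      rw [map_mul, ← AlgHom.comp_apply, aeval_mk_comp_aeval, Ideal.Quotient.mkₐ_eq_mk,
        Ideal.Quotient.eq_zero_iff_mem.mpr (Ideal.subset_span (Set.mem_insert P _) : P ∈ I),
        mul_zero])
    (Ideal.Quotient.algHom_ext _ <| Polynomial.algHom_ext <| by
      rw [AlgHom.comp_assoc, Ideal.Quotient.liftₐ_comp, AlgHom.comp_apply, Polynomial.aeval_X,
        ← Ideal.Quotient.mkₐ_eq_mk R, ← AlgHom.comp_apply, Ideal.Quotient.liftₐ_comp]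
      simp)
    (Ideal.Quotient.algHom_ext _ <| by
      rw [AlgHom.comp_assoc, Ideal.Quotient.liftₐ_comp, ← AlgHom.comp_assoc,
        Ideal.Quotient.liftₐ_comp, aeval_mk_comp_aeval, AlgHom.id_comp])

end MvPolynomial

namespace Polynomial

variable {K : Type*} [Field K]

noncomputable def qhGeomSum (n : ℕ) (q : K) : K[X] :=
  ∑ j ∈ Finset.range (n + 1), (1 - C q⁻¹ * X ^ n) ^ j

variable {n : ℕ} {q : K}

lemma eval_zero_qhGeomSum (hn : n ≠ 0) : (qhGeomSum n q).eval 0 = n + 1 := by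
  simp [qhGeomSum, eval_finsetSum, zero_pow hn]

lemma isRoot_X_pow_mul_qhGeomSum_zero (hn : n ≠ 0) : (X ^ n * qhGeomSum n q).IsRoot 0 := by
  simp [zero_pow hn]

variable [CharZero K]

lemma not_isRoot_qhGeomSum_zero (hn : n ≠ 0) : ¬ (qhGeomSum n q).IsRoot 0 := by
  rw [IsRoot.def, eval_zero_qhGeomSum hn]
  exact Nat.cast_add_one_ne_zero n

lemma qhGeomSum_ne_zero (hn : n ≠ 0) : qhGeomSum n q ≠ 0 :=
  fun h ↦ not_isRoot_qhGeomSum_zero (q := q) hn (by simp [h])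

lemma X_pow_mul_qhGeomSum_ne_zero (hn : n ≠ 0) : X ^ n * qhGeomSum n q ≠ 0 :=
  mul_ne_zero (pow_ne_zero n X_ne_zero) (qhGeomSum_ne_zero hn)

lemma not_isRoot_derivative_qhGeomSum (hn : n ≠ 0) (hq : q ≠ 0) {b : K}
    (hb : (qhGeomSum n q).IsRoot b) : ¬ (derivative (qhGeomSum n q)).IsRoot b := by
  set w : K[X] := 1 - C q⁻¹ * X ^ n
  have hb0 : b ≠ 0 := by rintro rfl; exact not_isRoot_qhGeomSum_zero hn hb
  have hgeom : qhGeomSum n q * (w - 1) = w ^ (n + 1) - 1 := geom_sum_mul w (n + 1)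
  have hw : w.eval b ^ (n + 1) = 1 := by
    have := congrArg (eval b) hgeom
    rw [eval_mul, hb.eq_zero, zero_mul, eval_sub, eval_pow, eval_one] at this
    exact (sub_eq_zero.mp this.symm)
  have hw0 : w.eval b ≠ 0 := by
    rintro h; rw [h, zero_pow (Nat.succ_ne_zero n)] at hw; exact zero_ne_one hw
  have hdw : (derivative w).eval b ≠ 0 := by
    have : (derivative w).eval b = -(q⁻¹ * n * b ^ (n - 1)) := by
      simp [w, derivative_X_pow, mul_assoc]
    rw [this, neg_ne_zero]
    exact mul_ne_zero (mul_ne_zero (inv_ne_zero hq) (Nat.cast_ne_zero.mpr hn))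
      (pow_ne_zero _ hb0)
  -- Differentiating `hgeom` at the root `b` leaves `h'(b) (w(b) - 1) = (n + 1) w(b)ⁿ w'(b) ≠ 0`.
  intro h
  have := congrArg (fun p ↦ (derivative p).eval b) hgeom
  simp only [derivative_mul, derivative_sub, derivative_one, derivative_pow, eval_add, eval_mul,
    eval_sub, h.eq_zero, hb.eq_zero, zero_mul, add_zero, eval_C, eval_pow, sub_zero,
    Nat.add_sub_cancel] at this
  exact mul_ne_zero (mul_ne_zero (Nat.cast_ne_zero.mpr n.succ_ne_zero) (pow_ne_zero _ hw0)) hdw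
    this.symm

lemma rootMultiplicity_qhGeomSum (hn : n ≠ 0) (hq : q ≠ 0) {b : K}
    (hb : (qhGeomSum n q).IsRoot b) : rootMultiplicity b (qhGeomSum n q) = 1 := by
  have h0 := qhGeomSum_ne_zero (q := q) hn
  refine le_antisymm (not_lt.mp fun h ↦ ?_) ((rootMultiplicity_pos h0).mpr hb)
  exact not_isRoot_derivative_qhGeomSum hn hq hb ((one_lt_rootMultiplicity_iff_isRoot h0).mp h).2

lemma rootMultiplicity_X_pow_mul_qhGeomSum_zero (hn : n ≠ 0) :
    rootMultiplicity 0 (X ^ n * qhGeomSum n q) = n := by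
  rw [rootMultiplicity_mul (X_pow_mul_qhGeomSum_ne_zero hn),
    rootMultiplicity_eq_zero (not_isRoot_qhGeomSum_zero hn), ← sub_zero X, ← C_0,
    rootMultiplicity_X_sub_C_pow, add_zero]

lemma rootMultiplicity_X_pow_mul_qhGeomSum_of_ne_zero (hn : n ≠ 0) (hq : q ≠ 0) {b : K}
    (hb : (X ^ n * qhGeomSum n q).IsRoot b) (hb0 : b ≠ 0) :
    rootMultiplicity b (X ^ n * qhGeomSum n q) = 1 := by
  have hXb : ¬ (X ^ n : K[X]).IsRoot b := by simp [hb0]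
  rw [rootMultiplicity_mul (X_pow_mul_qhGeomSum_ne_zero hn), rootMultiplicity_eq_zero hXb,
    zero_add, rootMultiplicity_qhGeomSum hn hq]
  simpa [IsRoot, hb0] using hb

end Polynomial

lemma qhFlIdeal_eq_span {n : ℕ} {q₁ q₂ : ℂ} (hq₁ : q₁ ≠ 0) (hq : q₁ + (-1 : ℂ) ^ n * q₂ = 0) :
    qhFlIdeal n q₁ q₂ = Ideal.span
      {∑ k ∈ Finset.range (n + 1), (X 0 : MvPolynomial (Fin 2) ℂ) ^ k * (-X 1) ^ (n - k),
        X 1 - Polynomial.aeval (X 0)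
          (Polynomial.C q₁⁻¹ * Polynomial.X ^ (n + 1) - Polynomial.X)} := by
  have h₁ : ∑ k ∈ Finset.range (n + 1), (X 0 : MvPolynomial (Fin 2) ℂ) ^ k * (-X 1) ^ (n - k)
      - C q₁ - C ((-1 : ℂ) ^ n * q₂) =
      ∑ k ∈ Finset.range (n + 1), (X 0 : MvPolynomial (Fin 2) ℂ) ^ k * (-X 1) ^ (n - k) := by
    rw [sub_sub, ← C_add, hq, C_0, sub_zero]
  have h₂ : (X 0 : MvPolynomial (Fin 2) ℂ) ^ (n + 1) - C q₁ * (X 0 + X 1) =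
      C (-q₁) * (X 1 - Polynomial.aeval (X 0)
        (Polynomial.C q₁⁻¹ * Polynomial.X ^ (n + 1) - Polynomial.X)) := by
    simp only [map_sub, map_mul, map_pow, Polynomial.aeval_X, Polynomial.aeval_C, algebraMap_eq,
      map_neg]
    have hq₁' : C q₁ * C q₁⁻¹ = (1 : MvPolynomial (Fin 2) ℂ) := by
      rw [← C_mul, mul_inv_cancel₀ hq₁, C_1]
    linear_combination (-X 0 ^ (n + 1) : MvPolynomial (Fin 2) ℂ) * hq₁'
  rw [qhFlIdeal, h₁, h₂, Ideal.span_insert, Ideal.span_insert,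
    Ideal.span_singleton_mul_left_unit ((neg_ne_zero.mpr hq₁).isUnit.map C)]

lemma aeval_sum_pow_mul_neg_pow (n : ℕ) (q : ℂ) :
    aeval ![Polynomial.X, Polynomial.C q⁻¹ * Polynomial.X ^ (n + 1) - Polynomial.X]
      (∑ k ∈ Finset.range (n + 1), (X 0 : MvPolynomial (Fin 2) ℂ) ^ k * (-X 1) ^ (n - k)) =
      Polynomial.X ^ n * Polynomial.qhGeomSum n q := by
  have hφ : -(Polynomial.C q⁻¹ * Polynomial.X ^ (n + 1) - Polynomial.X) =
      Polynomial.X * (1 - Polynomial.C q⁻¹ * Polynomial.X ^ n) := by ring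
  simp only [map_sum, map_mul, map_pow, map_neg, aeval_X, Matrix.cons_val_zero,
    Matrix.cons_val_one, hφ]
  rw [Polynomial.qhGeomSum, Finset.mul_sum, ← Finset.sum_range_reflect]
  refine Finset.sum_congr rfl fun k hk ↦ ?_
  have hkn := Finset.mem_range_succ_iff.mp hk
  rw [mul_pow, ← mul_assoc, ← pow_add]
  congr 2 <;> omega

noncomputable def qhFlQuotientEquiv {n : ℕ} {q₁ q₂ : ℂ} (hq₁ : q₁ ≠ 0)
    (hq : q₁ + (-1 : ℂ) ^ n * q₂ = 0) :
    (MvPolynomial (Fin 2) ℂ ⧸ qhFlIdeal n q₁ q₂) ≃ₐ[ℂ]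
      ℂ[X] ⧸ Ideal.span {Polynomial.X ^ n * Polynomial.qhGeomSum n q₁} :=
  (Ideal.quotientEquivAlgOfEq ℂ (qhFlIdeal_eq_span hq₁ hq)).trans <|
    (quotientSpanSubstEquiv _ _).trans
      (Ideal.quotientEquivAlgOfEq ℂ (by rw [aeval_sum_pow_mul_neg_pow]))

noncomputable def qhFlMaximalIdealZero {n : ℕ} {q₁ q₂ : ℂ} (hq₁ : q₁ ≠ 0)
    (hq : q₁ + (-1 : ℂ) ^ n * q₂ = 0) : Ideal (MvPolynomial (Fin 2) ℂ ⧸ qhFlIdeal n q₁ q₂) :=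
  (Polynomial.rootIdeal _ 0).comap (qhFlQuotientEquiv hq₁ hq)

theorem qhFl_localization_dichotomy {n : ℕ} {q₁ q₂ : ℂ} (hn : n ≠ 0) (hq₁ : q₁ ≠ 0)
    (hq : q₁ + (-1 : ℂ) ^ n * q₂ = 0) (𝔪 : Ideal (MvPolynomial (Fin 2) ℂ ⧸ qhFlIdeal n q₁ q₂))
    [𝔪.IsMaximal] :
    (𝔪 = qhFlMaximalIdealZero hq₁ hq ∧
      Nonempty (Localization.AtPrime 𝔪 ≃ₐ[ℂ] ℂ[X] ⧸ Ideal.span {(Polynomial.X : ℂ[X]) ^ n})) ∨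
    (𝔪 ≠ qhFlMaximalIdealZero hq₁ hq ∧ IsField (Localization.AtPrime 𝔪)) := by
  obtain ⟨a, ha, rfl, ⟨φ⟩⟩ :=
    Polynomial.exists_eq_comap_rootIdeal (Polynomial.X_pow_mul_qhGeomSum_ne_zero (q := q₁) hn)
      (qhFlQuotientEquiv hq₁ hq) 𝔪
  rcases eq_or_ne a 0 with rfl | ha0
  · refine .inl ⟨rfl, ⟨φ.trans (Ideal.quotientEquivAlgOfEq ℂ ?_)⟩⟩
    rw [Polynomial.rootMultiplicity_X_pow_mul_qhGeomSum_zero hn, Polynomial.C_0, sub_zero]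
  · refine .inr ⟨fun h ↦ ha0 ?_, (MulEquiv.isField_congr φ.toMulEquiv).mpr
      ((Polynomial.isField_quotient_span_X_sub_C_pow_iff _).mpr
        (Polynomial.rootMultiplicity_X_pow_mul_qhGeomSum_of_ne_zero hn hq₁ ha ha0))⟩
    exact Polynomial.eq_of_rootIdeal_eq (Polynomial.isRoot_X_pow_mul_qhGeomSum_zero hn)
      (Ideal.comap_injective_of_surjective _ (qhFlQuotientEquiv hq₁ hq).surjective h)

theorem stmt_1_general (n : ℕ) (hn : 2 ≤ n) (q₁ q₂ : ℂ) (hq₁ : q₁ ≠ 0)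
    (hq : q₁ + (-1 : ℂ) ^ n * q₂ = 0) :
    (∃! 𝔪 : Ideal (MvPolynomial (Fin 2) ℂ ⧸ qhFlIdeal n q₁ q₂),
      ∃ hm : 𝔪.IsMaximal,
        haveI := hm.isPrime
        ¬ IsField (Localization.AtPrime 𝔪)) ∧
    ∀ (𝔪 : Ideal (MvPolynomial (Fin 2) ℂ ⧸ qhFlIdeal n q₁ q₂)) (hm : 𝔪.IsMaximal),
      (haveI := hm.isPrime
       ¬ IsField (Localization.AtPrime 𝔪)) →
      haveI := hm.isPrime
      Nonempty ((Localization.AtPrime 𝔪) ≃ₐ[ℂ]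
        (Polynomial ℂ ⧸ Ideal.span {(Polynomial.X : Polynomial ℂ) ^ n})) := by
  have hn0 : n ≠ 0 := by omega
  have := Polynomial.isMaximal_rootIdeal (Polynomial.isRoot_X_pow_mul_qhGeomSum_zero (q := q₁) hn0)
  set 𝔪₀ := qhFlMaximalIdealZero hq₁ hq
  have h𝔪₀ : 𝔪₀.IsMaximal := Ideal.comap_isMaximal_of_equiv _
  have hnotField : ¬ IsField (Localization.AtPrime 𝔪₀) := by
    rcases qhFl_localization_dichotomy hn0 hq₁ hq 𝔪₀ with ⟨-, ⟨φ⟩⟩ | ⟨hne, -⟩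
    · exact fun h ↦ Polynomial.not_isField_quotient_span_X_pow (by omega)
        ((MulEquiv.isField_congr φ.toMulEquiv).mp h)
    · exact absurd rfl hne
  refine ⟨⟨𝔪₀, ⟨h𝔪₀, hnotField⟩, fun 𝔪 ⟨h𝔪, hbad⟩ ↦ ?_⟩, fun 𝔪 h𝔪 hbad ↦ ?_⟩
  · exact (qhFl_localization_dichotomy hn0 hq₁ hq 𝔪).elim And.left fun h ↦ absurd h.2 hbad
  · exact (qhFl_localization_dichotomy hn0 hq₁ hq 𝔪).elim (·.2) fun h ↦ absurd h.2 hbad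

theorem stmt_1 (n : ℕ) (hn : 2 ≤ n) (q₁ q₂ : ℂ) (hq₁ : q₁ ≠ 0) (hq₂ : q₂ ≠ 0)
    (hq : q₁ + (-1 : ℂ) ^ n * q₂ = 0) :
    (∃! 𝔪 : Ideal (MvPolynomial (Fin 2) ℂ ⧸ qhFlIdeal n q₁ q₂),
      ∃ hm : 𝔪.IsMaximal,
        haveI := hm.isPrime
        ¬ IsField (Localization.AtPrime 𝔪)) ∧
    ∀ (𝔪 : Ideal (MvPolynomial (Fin 2) ℂ ⧸ qhFlIdeal n q₁ q₂)) (hm : 𝔪.IsMaximal),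
      (haveI := hm.isPrime
       ¬ IsField (Localization.AtPrime 𝔪)) →
      haveI := hm.isPrime
      Nonempty ((Localization.AtPrime 𝔪) ≃ₐ[ℂ]
        (Polynomial ℂ ⧸ Ideal.span {(Polynomial.X : Polynomial ℂ) ^ n})) :=
  stmt_1_general n hn q₁ q₂ hq₁ hq
end

section
/- Let n ≥ 2 be an even integer. Then the quotient of the polynomial ring ℂ[h₁,h₂] by the ideal generated by (∑_{k=0}^{n} h₁ᵏ(−h₂)^{n−k}) − 2, h₁^{n+1} − (h₁+h₂), and h₁ + h₂ is the zero ring; equivalently, this ideal is the whole ring ℂ[h₁,h₂]. -/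
/-!
Modulo `h₁ + h₂` we have `h₂ = -h₁`, so with `x = h₁` the relations become `x ^ (n + 1) = 0` and
`(n + 1) x ^ n = 2`. Multiplying the second by `x` gives `2 x = 0`, hence `x = 0` since `2` is
invertible over `ℂ`; then `2 = (n + 1) 0 ^ n = 0`, so the quotient is the zero ring.
-/

open MvPolynomial

theorem zero_eq_one_of_pow_succ_eq_zero_of_mul_pow_eq_two {R : Type*} [CommRing R] {x : R}
    {n : ℕ} (hn : n ≠ 0) (h2 : IsUnit (2 : R)) (hpow : x ^ (n + 1) = 0)
    (hsum : (n + 1 : R) * x ^ n = 2) : (0 : R) = 1 := by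
  have hx : x = 0 := by
    refine h2.mul_right_eq_zero.mp ?_
    rw [← hsum, mul_assoc, ← pow_succ, hpow, mul_zero]
  rw [hx, zero_pow hn, mul_zero] at hsum
  exact isUnit_zero_iff.mp (hsum ▸ h2)

theorem sum_range_succ_pow_mul_pow_sub {R : Type*} [CommRing R] (x : R) (n : ℕ) :
    ∑ k ∈ Finset.range (n + 1), x ^ k * x ^ (n - k) = (n + 1 : R) * x ^ n := by
  simpa using geom_sum₂_self x (n + 1)

theorem Ideal.eq_top_of_sum_sub_two_mem_of_pow_sub_mem_of_add_mem {A : Type*} [CommRing A]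
    {I : Ideal A} {x y : A} {n : ℕ} (hn : n ≠ 0) (h2 : IsUnit (2 : A))
    (hsum : (∑ k ∈ Finset.range (n + 1), x ^ k * (-y) ^ (n - k)) - 2 ∈ I)
    (hpow : x ^ (n + 1) - (x + y) ∈ I) (hxy : x + y ∈ I) : I = ⊤ := by
  have hxy' : Ideal.Quotient.mk I x + Ideal.Quotient.mk I y = 0 := by
    simpa only [map_add] using Ideal.Quotient.eq_zero_iff_mem.mpr hxy
  have hy : -Ideal.Quotient.mk I y = Ideal.Quotient.mk I x := neg_eq_of_add_eq_zero_left hxy'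
  rw [← Ideal.Quotient.zero_eq_one_iff]
  refine zero_eq_one_of_pow_succ_eq_zero_of_mul_pow_eq_two (x := Ideal.Quotient.mk I x) hn
    (map_ofNat (Ideal.Quotient.mk I) 2 ▸ h2.map _) ?_ ?_
  · simpa only [map_sub, map_pow, map_add, hxy', sub_zero]
      using Ideal.Quotient.eq_zero_iff_mem.mpr hpow
  · rw [← sum_range_succ_pow_mul_pow_sub, ← sub_eq_zero]
    simpa only [map_sub, map_sum, map_mul, map_pow, map_neg, map_ofNat, hy]
      using Ideal.Quotient.eq_zero_iff_mem.mpr hsum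

theorem stmt_2_general (n : ℕ) (hn : 2 ≤ n) :
    Ideal.span
      { (∑ k ∈ Finset.range (n + 1), (X 0 : MvPolynomial (Fin 2) ℂ) ^ k * (-X 1) ^ (n - k))
          - C (2 : ℂ),
        (X 0 : MvPolynomial (Fin 2) ℂ) ^ (n + 1) - (X 0 + X 1),
        (X 0 : MvPolynomial (Fin 2) ℂ) + X 1 } = (⊤ : Ideal (MvPolynomial (Fin 2) ℂ)) := by
  have h2 : IsUnit (2 : MvPolynomial (Fin 2) ℂ) :=
    map_ofNat (C : ℂ →+* MvPolynomial (Fin 2) ℂ) 2 ▸ (isUnit_of_invertible (2 : ℂ)).map C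
  rw [show C (2 : ℂ) = (2 : MvPolynomial (Fin 2) ℂ) from map_ofNat C 2]
  refine Ideal.eq_top_of_sum_sub_two_mem_of_pow_sub_mem_of_add_mem (x := X 0) (y := X 1) (n := n)
    (by omega) h2 ?_ ?_ ?_ <;> exact Ideal.subset_span (by simp)

theorem stmt_2 (n : ℕ) (hn : 2 ≤ n) (heven : Even n) :
    Ideal.span
      { (∑ k ∈ Finset.range (n + 1), (X 0 : MvPolynomial (Fin 2) ℂ) ^ k * (-X 1) ^ (n - k))
          - C (2 : ℂ),
        (X 0 : MvPolynomial (Fin 2) ℂ) ^ (n + 1) - (X 0 + X 1),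
        (X 0 : MvPolynomial (Fin 2) ℂ) + X 1 } = (⊤ : Ideal (MvPolynomial (Fin 2) ℂ)) :=
  stmt_2_general n hn
end

section
/- Let K be a field of characteristic zero and let n ≥ 4 be an integer. Then the quotient ring K[p,γ]/( pγ , γ² − (n−1)p^{n−2} , p^{n−1} ) is a K-vector space of dimension exactly n. -/
/-!
Modulo the ideal, `p γ = 0`, `γ² ≡ c p^m` and `p^(m+1) = 0`, so the classes of
`1, p, …, p^m, γ` span the quotient: their span contains `1` and is stable under
multiplication by `p` and `γ`. They are independent because the functionals
`coeff p^j` (`j < m`), `coeff γ` and `coeff p^m + c · coeff γ²` (corrected because `γ² ≡ c p^m`)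
vanish on every multiple of each generator; for the generator `γ² - c p^m` this needs `m ≠ 0`.
-/

open MvPolynomial

theorem AddMonoidHom.map_eq_zero_of_mem_ideal_span {R M : Type*} [CommSemiring R]
    [AddCommMonoid M] (φ : R →+ M) {s : Set R} (h : ∀ g ∈ s, ∀ r, φ (r * g) = 0) {f : R}
    (hf : f ∈ Ideal.span s) : φ f = 0 := by
  suffices ∀ r, φ (r * f) = 0 by simpa using this 1
  induction hf using Submodule.span_induction with
  | mem g hg => exact h g hg
  | zero => simp
  | add x y _ _ hx hy => simp [mul_add, hx, hy]
  | smul a x _ hx => simpa [mul_assoc] using fun r => hx (r * a)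

theorem Submodule.eq_top_of_one_mem_of_mul_mem {R A : Type*} [CommSemiring R] [Semiring A]
    [Algebra R A] {s : Set A} (hs : Algebra.adjoin R s = ⊤) (W : Submodule R A) (h1 : 1 ∈ W)
    (hmul : ∀ x ∈ s, ∀ w ∈ W, x * w ∈ W) : W = ⊤ := by
  have hstable (a : A) : ∀ w ∈ W, a * w ∈ W := by
    have ha : a ∈ Algebra.adjoin R s := hs ▸ Algebra.mem_top
    induction ha using Algebra.adjoin_induction with
    | mem x hx => exact hmul x hx
    | algebraMap r => simpa [← Algebra.smul_def] using fun w hw => W.smul_mem r hw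
    | add x y _ _ hx hy => exact fun w hw => by simpa [add_mul] using W.add_mem (hx w hw) (hy w hw)
    | mul x y _ _ hx hy => exact fun w hw => by simpa [mul_assoc] using hx _ (hy w hw)
  exact eq_top_iff.2 fun a _ => by simpa using hstable a 1 h1

theorem MvPolynomial.adjoin_range_mkₐ_comp_X {R σ : Type*} [CommRing R]
    (I : Ideal (MvPolynomial σ R)) :
    Algebra.adjoin R (Set.range (Ideal.Quotient.mkₐ R I ∘ X)) = ⊤ := by
  rw [Set.range_comp, Algebra.adjoin_image, adjoin_range_X, Algebra.map_top,
    AlgHom.range_eq_top]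
  exact Ideal.Quotient.mkₐ_surjective R I

variable {K : Type*} [Field K]

/-- With `X 0 = p`, `X 1 = γ`, `m = n - 2` and `c = n - 1` this is the ideal of the theorem. -/
noncomputable def fatPointIdeal (c : K) (m : ℕ) : Ideal (MvPolynomial (Fin 2) K) :=
  Ideal.span {X 0 * X 1, X 1 ^ 2 - C c * X 0 ^ m, X 0 ^ (m + 1)}

noncomputable def normalMonomial (m : ℕ) : Option (Fin (m + 1)) → MvPolynomial (Fin 2) K
  | none => X 1
  | some i => X 0 ^ (i : ℕ)

noncomputable def normalCoeff (c : K) (m : ℕ) :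
    Option (Fin (m + 1)) → MvPolynomial (Fin 2) K →ₗ[K] K
  | none => lcoeff K (Finsupp.single 1 1)
  | some i =>
    lcoeff K (Finsupp.single 0 i) +
      (if (i : ℕ) = m then c else 0) • lcoeff K (Finsupp.single 1 2)

variable (c : K) {m : ℕ}

@[simp]
theorem normalCoeff_none_apply (f : MvPolynomial (Fin 2) K) :
    normalCoeff c m none f = coeff (Finsupp.single 1 1) f := rfl

@[simp]
theorem normalCoeff_some_apply (i : Fin (m + 1)) (f : MvPolynomial (Fin 2) K) :
    normalCoeff c m (some i) f = coeff (Finsupp.single 0 i) f +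
      (if (i : ℕ) = m then c else 0) * coeff (Finsupp.single 1 2) f := rfl

theorem normalCoeff_normalMonomial (i j : Option (Fin (m + 1))) :
    normalCoeff c m j (normalMonomial m i) = if i = j then 1 else 0 := by
  cases i <;> cases j <;>
    simp [normalMonomial, X, monomial_pow, coeff_monomial, Finsupp.smul_single,
      (Finsupp.single_injective _).eq_iff, Fin.val_inj, Finsupp.single_eq_single_iff]

theorem normalCoeff_mul_X_mul_X (j : Option (Fin (m + 1))) (r : MvPolynomial (Fin 2) K) :
    normalCoeff c m j (r * (X 0 * X 1)) = 0 := by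
  rw [X, X, monomial_mul, one_mul]
  cases j <;> simp [coeff_mul_monomial', Finsupp.le_def, Fin.forall_fin_two]

theorem normalCoeff_mul_X_pow (j : Option (Fin (m + 1))) (r : MvPolynomial (Fin 2) K) :
    normalCoeff c m j (r * X 0 ^ (m + 1)) = 0 := by
  rw [X_pow_eq_monomial]
  cases j <;> simp [coeff_mul_monomial', Finsupp.le_def, Fin.forall_fin_two, Fin.is_le]

theorem normalCoeff_mul_X_sq_sub (hm : m ≠ 0) (j : Option (Fin (m + 1)))
    (r : MvPolynomial (Fin 2) K) : normalCoeff c m j (r * (X 1 ^ 2 - C c * X 0 ^ m)) = 0 := by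
  rw [X_pow_eq_monomial, C_mul_X_pow_eq_monomial]
  rcases j with _ | j
  · simp [hm, mul_sub, coeff_mul_monomial', Finsupp.le_def, Fin.forall_fin_two]
  · obtain hj | hj := (Fin.is_le j).eq_or_lt
    · simp [hj, hm, mul_sub, coeff_mul_monomial', Finsupp.le_def, Fin.forall_fin_two, mul_comm]
    · simp [hj.ne, hj.not_ge, hm, mul_sub, coeff_mul_monomial', Finsupp.le_def,
        Fin.forall_fin_two]

theorem normalCoeff_eq_zero_of_mem (hm : m ≠ 0) (j : Option (Fin (m + 1)))
    {f : MvPolynomial (Fin 2) K} (hf : f ∈ fatPointIdeal c m) : normalCoeff c m j f = 0 := by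
  refine (normalCoeff c m j).toAddMonoidHom.map_eq_zero_of_mem_ideal_span ?_ hf
  rintro g (rfl | rfl | rfl) r
  exacts [normalCoeff_mul_X_mul_X c j r, normalCoeff_mul_X_sq_sub c hm j r,
    normalCoeff_mul_X_pow c j r]

theorem linearIndependent_mkₐ_normalMonomial (hm : m ≠ 0) :
    LinearIndependent K (Ideal.Quotient.mkₐ K (fatPointIdeal c m) ∘ normalMonomial m) := by
  rw [Fintype.linearIndependent_iff]
  intro a ha j
  have hmem : ∑ i, a i • normalMonomial m i ∈ fatPointIdeal c m := by
    rw [← Ideal.Quotient.eq_zero_iff_mem, ← Ideal.Quotient.mkₐ_eq_mk K]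
    simpa only [map_sum, map_smul, Function.comp_apply] using ha
  simpa only [map_sum, map_smul, normalCoeff_normalMonomial, smul_eq_mul, mul_ite, mul_one,
    mul_zero, Finset.sum_ite_eq', Finset.mem_univ, if_true]
    using normalCoeff_eq_zero_of_mem c hm j hmem

theorem mkₐ_X_mul_normalMonomial_mem_span (i : Fin 2) (j : Option (Fin (m + 1))) :
    Ideal.Quotient.mkₐ K (fatPointIdeal c m) (X i * normalMonomial m j) ∈
      Submodule.span K
        (Set.range (Ideal.Quotient.mkₐ K (fatPointIdeal c m) ∘ normalMonomial m)) := by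
  set π := Ideal.Quotient.mkₐ K (fatPointIdeal c m)
  set W := Submodule.span K (Set.range (π ∘ normalMonomial m))
  have hμ (k) : π (normalMonomial m k) ∈ W := Submodule.subset_span ⟨k, rfl⟩
  have hI {f} (hf : f ∈ fatPointIdeal c m) : π f ∈ W := by
    rw [Ideal.Quotient.mkₐ_eq_mk, Ideal.Quotient.eq_zero_iff_mem.2 hf]
    exact W.zero_mem
  fin_cases i
  · rcases j with _ | ⟨j, hj⟩
    · exact hI (Ideal.subset_span (by simp [normalMonomial]))
    · by_cases h : j + 1 ≤ m
      · simpa [normalMonomial, pow_succ'] using hμ (some ⟨j + 1, by omega⟩)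
      · obtain rfl : j = m := by omega
        exact hI (Ideal.subset_span (by simp [normalMonomial, pow_succ']))
  · rcases j with _ | ⟨_ | j, hj⟩
    · have hsq : (X 1 * X 1 : MvPolynomial (Fin 2) K) =
          (X 1 ^ 2 - C c * X 0 ^ m) + c • X 0 ^ m := by
        rw [smul_eq_C_mul]; ring
      have hrel : π (X 1 ^ 2 - C c * X 0 ^ m) ∈ W := hI (Ideal.subset_span (by simp))
      simpa [normalMonomial, hsq] using
        W.add_mem hrel (W.smul_mem c (hμ (some (Fin.last m))))
    · simpa [normalMonomial] using hμ none
    · have hmem : X 1 * X 0 ^ (j + 1) ∈ fatPointIdeal c m := by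
        rw [pow_succ, mul_left_comm, mul_comm (X 1)]
        exact Ideal.mul_mem_left _ _ (Ideal.subset_span (by simp))
      exact hI hmem

theorem span_mkₐ_normalMonomial :
    Submodule.span K
      (Set.range (Ideal.Quotient.mkₐ K (fatPointIdeal c m) ∘ normalMonomial m)) = ⊤ := by
  refine Submodule.eq_top_of_one_mem_of_mul_mem (adjoin_range_mkₐ_comp_X _) _
    (Submodule.subset_span ⟨some 0, by simp [normalMonomial]⟩) ?_
  rintro _ ⟨i, rfl⟩ w hw
  induction hw using Submodule.span_induction with
  | mem _ hw =>
    obtain ⟨j, rfl⟩ := hw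
    simpa using mkₐ_X_mul_normalMonomial_mem_span c i j
  | zero => simp
  | add _ _ _ _ hx hy => simpa [mul_add] using Submodule.add_mem _ hx hy
  | smul a _ _ hx => simpa [mul_smul_comm] using Submodule.smul_mem _ a hx

theorem finrank_quotient_fatPointIdeal (hm : m ≠ 0) :
    Module.finrank K (MvPolynomial (Fin 2) K ⧸ fatPointIdeal c m) = m + 2 := by
  rw [Module.finrank_eq_card_basis (Module.Basis.mk (linearIndependent_mkₐ_normalMonomial c hm)
    (span_mkₐ_normalMonomial c).ge)]
  simp

theorem stmt_11_general (K : Type) [Field K] (n : ℕ) (hn : 4 ≤ n) :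
    Module.finrank K
      (MvPolynomial (Fin 2) K ⧸
        Ideal.span
          { (X 0 : MvPolynomial (Fin 2) K) * X 1,
            (X 1 : MvPolynomial (Fin 2) K) ^ 2 - C ((n : K) - 1) * X 0 ^ (n - 2),
            (X 0 : MvPolynomial (Fin 2) K) ^ (n - 1) }) = n := by
  obtain ⟨m, rfl⟩ : ∃ m, n = m + 2 := ⟨n - 2, by omega⟩
  exact finrank_quotient_fatPointIdeal _ (by omega)

theorem stmt_11 (K : Type) [Field K] [CharZero K] (n : ℕ) (hn : 4 ≤ n) :
    Module.finrank K
      (MvPolynomial (Fin 2) K ⧸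
        Ideal.span
          { (X 0 : MvPolynomial (Fin 2) K) * X 1,
            (X 1 : MvPolynomial (Fin 2) K) ^ 2 - C ((n : K) - 1) * X 0 ^ (n - 2),
            (X 0 : MvPolynomial (Fin 2) K) ^ (n - 1) }) = n :=
  stmt_11_general K n hn
end
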